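/- If F is an irredundant family of intervals and F ∪ {g} is redundant for an interval g ∉ F, then there exists f ∈ F with f ≠ g such that (F ∪ {g}) \ {f} is irredundant. -/

import Mathlib

open scoped Classical

/-- A finite family of sets is irredundant if its members can be arranged in a
sequence such that each set contains a point not in any of the preceding sets. -/
def Irredundant (F : Finset (Set ℤ)) : Prop :=
  ∃ l : List (Set ℤ), l.Nodup ∧ l.toFinset = F ∧
    ∀ i : Fin l.length, ∃ x ∈ l.get i, ∀ j : Fin l.length, j < i → x ∉ l.get j

/-- An interval is a nonempty half-open integer interval `[a,b)`. -/
def IsItv (s : Set ℤ) : Prop := ∃ a b : ℤ, a < b ∧ s = Set.Ico a b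

/-- `F|s`: the members of `F` contained in `s`. -/
noncomputable def Res (F : Finset (Set ℤ)) (s : Set ℤ) : Finset (Set ℤ) :=
  F.filter (fun f => f ⊆ s)

/-- `N_x F`: the number of members of `F` containing `x`. -/
noncomputable def Nx (F : Finset (Set ℤ)) (x : ℤ) : ℕ :=
  (F.filter (fun f => x ∈ f)).card

/-!
Call a family *twice-covering* if every point of every member lies in some other member. A family
is irredundant exactly when none of its nonempty subfamilies is twice-covering: the last set of an
admissible ordering that meets a subfamily has a point private to it there, and conversely a set
with a point private in the whole family can always be placed last.

Twice-covering subfamilies of `E = F ∪ {g}` are closed under union, so there is a largest one, `M`;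
as `F` is irredundant, each nonempty one contains `g`. Since `g` is nonempty, `M \ {g}` is a
nonempty subfamily of `F`, so some `f ∈ M \ {g}` has a point `x` covered by no other member of
`M \ {g}`. In `M` the point `x` is covered twice, hence `x ∈ g`, and `f, g` are the only members
of `M` containing `x`. A nonempty twice-covering subfamily of `E \ {f}` would contain `g` and lie
in `M`, leaving `x` covered once. So `E \ {f}` is irredundant.
-/

open Finset

section CoversTwice

variable {α : Type*}

def CoversTwice (G : Finset (Set α)) : Prop :=
  ∀ f ∈ G, ∀ x ∈ f, ∃ h ∈ G, h ≠ f ∧ x ∈ h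

theorem not_coversTwice_iff {G : Finset (Set α)} :
    ¬CoversTwice G ↔ ∃ f ∈ G, ∃ x ∈ f, ∀ h ∈ G, h ≠ f → x ∉ h := by
  simp [CoversTwice]

theorem exists_greatest_coversTwice (E : Finset (Set α)) :
    ∃ M ⊆ E, CoversTwice M ∧ ∀ G ⊆ E, CoversTwice G → G ⊆ M := by
  refine ⟨E.filter fun k => ∃ G ⊆ E, k ∈ G ∧ CoversTwice G, filter_subset _ _, ?_,
    fun G hGE hG k hk => mem_filter.mpr ⟨hGE hk, G, hGE, hk, hG⟩⟩
  intro f hf x hx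
  obtain ⟨-, G, hGE, hfG, hG⟩ := mem_filter.mp hf
  obtain ⟨h, hhG, hhf, hxh⟩ := hG f hfG x hx
  exact ⟨h, mem_filter.mpr ⟨hGE hhG, G, hGE, hhG, hG⟩, hhf, hxh⟩

theorem exists_forall_not_coversTwice_erase {F : Finset (Set α)} {g : Set α} (hg : g.Nonempty)
    (hF : ∀ G ⊆ F, G.Nonempty → ¬CoversTwice G)
    (hE : ∃ G ⊆ insert g F, G.Nonempty ∧ CoversTwice G) :
    ∃ f ∈ F, f ≠ g ∧ ∀ G ⊆ (insert g F).erase f, G.Nonempty → ¬CoversTwice G := by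
  have mem_of_coversTwice : ∀ G ⊆ insert g F, G.Nonempty → CoversTwice G → g ∈ G := by
    intro G hGE hne hG
    by_contra hgG
    exact hF G ((subset_insert_iff_of_notMem hgG).mp hGE) hne hG
  obtain ⟨M, hME, hM, hMmax⟩ := exists_greatest_coversTwice (insert g F)
  obtain ⟨G₀, hG₀E, hG₀ne, hG₀⟩ := hE
  have hgM : g ∈ M := hMmax G₀ hG₀E hG₀ (mem_of_coversTwice G₀ hG₀E hG₀ne hG₀)
  obtain ⟨z, hz⟩ := hg
  obtain ⟨k, hkM, hkg, -⟩ := hM g hgM z hz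
  have hMF : M.erase g ⊆ F := fun h hh =>
    mem_of_mem_insert_of_ne (hME (mem_of_mem_erase hh)) (ne_of_mem_erase hh)
  obtain ⟨f, hf, x, hxf, hx⟩ :=
    not_coversTwice_iff.mp (hF _ hMF ⟨k, mem_erase.mpr ⟨hkg, hkM⟩⟩)
  have hxg : x ∈ g := by
    obtain ⟨h, hhM, hhf, hxh⟩ := hM f (mem_of_mem_erase hf) x hxf
    by_contra hxg
    exact hx h (mem_erase.mpr ⟨fun e => hxg (e ▸ hxh), hhM⟩) hhf hxh
  refine ⟨f, hMF hf, ne_of_mem_erase hf, fun G hG hne hcov => ?_⟩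
  have hGE : G ⊆ insert g F := hG.trans (erase_subset _ _)
  obtain ⟨h, hhG, hhg, hxh⟩ := hcov g (mem_of_coversTwice G hGE hne hcov) x hxg
  have hhf : h ≠ f := fun e => notMem_erase f _ (hG (e ▸ hhG))
  exact hx h (mem_erase.mpr ⟨hhg, hMmax G hGE hcov hhG⟩) hhf hxh

end CoversTwice

theorem Irredundant.insert {F : Finset (Set ℤ)} {f : Set ℤ} {x : ℤ} (hfF : f ∉ F) (hx : x ∈ f)
    (hxF : ∀ h ∈ F, x ∉ h) (hF : Irredundant F) : Irredundant (insert f F) := by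
  obtain ⟨l, hnd, rfl, hl⟩ := hF
  have hfl : f ∉ l := fun h => hfF (List.mem_toFinset.mpr h)
  refine ⟨l ++ [f], hnd.append (List.nodup_singleton f) (by simpa using hfl), by simp, ?_⟩
  rintro ⟨i, hi⟩
  rcases lt_or_eq_of_le (Nat.le_of_lt_succ (by simpa using hi)) with hil | rfl
  · obtain ⟨y, hy, hyl⟩ := hl ⟨i, hil⟩
    refine ⟨y, by simpa [List.getElem_append_left hil] using hy, fun ⟨j, hj⟩ hji => ?_⟩
    have hjl : j < l.length := (show j < i from hji).trans hil
    simpa [List.getElem_append_left hjl] using hyl ⟨j, hjl⟩ hji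
  · refine ⟨x, by simpa using hx, fun ⟨j, hj⟩ hji => ?_⟩
    simpa [List.getElem_append_left hji] using hxF _ (List.mem_toFinset.mpr (List.getElem_mem hji))

theorem Irredundant.not_coversTwice {F G : Finset (Set ℤ)} (hF : Irredundant F) (hGF : G ⊆ F)
    (hG : G.Nonempty) : ¬CoversTwice G := by
  obtain ⟨l, -, rfl, hl⟩ := hF
  have hI : (univ.filter fun i : Fin l.length => l.get i ∈ G).Nonempty := by
    obtain ⟨f, hf⟩ := hG
    obtain ⟨i, rfl⟩ := List.get_of_mem (List.mem_toFinset.mp (hGF hf))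
    exact ⟨i, mem_filter.mpr ⟨mem_univ _, hf⟩⟩
  set i := (univ.filter fun i : Fin l.length => l.get i ∈ G).max' hI
  have hiG : l.get i ∈ G := (mem_filter.mp (max'_mem _ hI)).2
  obtain ⟨x, hx, hxl⟩ := hl i
  intro hcov
  obtain ⟨h, hhG, hhi, hxh⟩ := hcov _ hiG x hx
  obtain ⟨j, rfl⟩ := List.get_of_mem (List.mem_toFinset.mp (hGF hhG))
  have hji : j ≤ i := le_max' _ j (mem_filter.mpr ⟨mem_univ _, hhG⟩)
  exact hxl j (lt_of_le_of_ne hji fun e => hhi (e ▸ rfl)) hxh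

theorem irredundant_of_forall_not_coversTwice {F : Finset (Set ℤ)}
    (h : ∀ G ⊆ F, G.Nonempty → ¬CoversTwice G) : Irredundant F := by
  induction F using Finset.strongInduction with
  | H F ih =>
    rcases F.eq_empty_or_nonempty with rfl | hne
    · exact ⟨[], List.nodup_nil, rfl, fun i => i.elim0⟩
    obtain ⟨f, hf, x, hxf, hx⟩ := not_coversTwice_iff.mp (h F subset_rfl hne)
    have hirr : Irredundant (F.erase f) :=
      ih _ (erase_ssubset hf) fun G hG => h G (hG.trans (erase_subset _ _))
    rw [← insert_erase hf]
    exact hirr.insert (notMem_erase f F) hxf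
      fun h hh => hx h (mem_of_mem_erase hh) (ne_of_mem_erase hh)

theorem irredundant_iff_forall_not_coversTwice {F : Finset (Set ℤ)} :
    Irredundant F ↔ ∀ G ⊆ F, G.Nonempty → ¬CoversTwice G :=
  ⟨fun hF _ hGF hG => hF.not_coversTwice hGF hG, irredundant_of_forall_not_coversTwice⟩

theorem IsItv.nonempty {s : Set ℤ} (hs : IsItv s) : s.Nonempty := by
  obtain ⟨a, b, hab, rfl⟩ := hs
  exact Set.nonempty_Ico.mpr hab

theorem exchange_property_general (F : Finset (Set ℤ)) (g : Set ℤ)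
    (hg : IsItv g)
    (hirr : Irredundant F) (hred : ¬ Irredundant (insert g F)) :
    ∃ f ∈ F, f ≠ g ∧ Irredundant ((insert g F).erase f) := by
  rw [irredundant_iff_forall_not_coversTwice] at hirr hred
  push Not at hred
  obtain ⟨f, hfF, hfg, hf⟩ := exists_forall_not_coversTwice_erase hg.nonempty hirr hred
  exact ⟨f, hfF, hfg, irredundant_iff_forall_not_coversTwice.mpr hf⟩

/-- If `F` is an irredundant family of intervals and `F ∪ {g}` is redundant for an
interval `g ∉ F`, then some `f ∈ F`, `f ≠ g`, can be exchanged: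
`(F ∪ {g}) \ {f}` is irredundant. -/
theorem exchange_property (F : Finset (Set ℤ)) (g : Set ℤ)
    (hF : ∀ f ∈ F, IsItv f) (hg : IsItv g) (hgF : g ∉ F)
    (hirr : Irredundant F) (hred : ¬ Irredundant (insert g F)) :
    ∃ f ∈ F, f ≠ g ∧ Irredundant ((insert g F).erase f) :=
  exchange_property_general F g hg hirr hred
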